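/- arXiv:math/0405042 — 3 statements merged into one kernel-verified Lean document; each statement's English description precedes it below -/
import Mathlib

section
/- Let β > 0 be a real number and let δ satisfy 0 < δ < min(β, 2π). Then the integral of the function γ ↦ cot(πγ/β) / sin²(γ/2) over the positively oriented circle of radius δ centered at 0 in the complex plane equals 2πi · (2/3) · ( β/(2π) − 2π/β ). -/
/-!
Write `a = π / β` and `f` for the integrand. Near `0`, `z cot (a z) = 1 / a - a z² / 3 + O(z⁴)` and
`1 / sin² (z / 2) = 4 / z² + 1 / 3 + O(z²)`, so `z f(z) - 4 / (a z²)` tends to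
`1 / (3 a) - 4 a / 3`. Subtracting the `z⁻³` term, whose circle integral vanishes, leaves
`(z f(z) - 4 / (a z²)) / z`, to which Cauchy's integral formula with a removable singularity
applies.
-/

open Filter Set Metric
open scoped Topology Real

namespace Complex

lemma sin_ne_zero_of_norm_lt_pi {z : ℂ} (h0 : z ≠ 0) (h : ‖z‖ < π) : sin z ≠ 0 := by
  rw [sin_ne_zero_iff]
  rintro k rfl
  have hk0 : k ≠ 0 := by rintro rfl; simp at h0
  have hk1 : (1 : ℝ) ≤ |(k : ℝ)| := by exact_mod_cast Int.one_le_abs hk0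
  rw [norm_mul, norm_intCast, norm_real, Real.norm_of_nonneg Real.pi_pos.le] at h
  nlinarith [Real.pi_pos]

lemma differentiableAt_cot {z : ℂ} (h : sin z ≠ 0) : DifferentiableAt ℂ cot z := by
  rw [show cot = fun z => cos z / sin z from funext cot_eq_cos_div_sin]
  exact differentiableAt_cos.div differentiableAt_sin h

lemma tendsto_const_mul_nhdsNE {a : ℂ} (ha : a ≠ 0) :
    Tendsto (a * ·) (𝓝[≠] 0) (𝓝[≠] 0) := by
  have := (Homeomorph.mulLeft₀ a ha).map_punctured_nhds_eq 0
  simp only [Homeomorph.coe_mulLeft₀, mul_zero] at this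
  exact this.le

lemma tendsto_div_pow_of_norm_sub_le {f : ℂ → ℂ} {L : ℂ} {C : ℝ} {n m : ℕ} (hnm : n < m)
    (hf : ∀ z : ℂ, ‖z‖ ≤ 1 → ‖f z - L * z ^ n‖ ≤ C * ‖z‖ ^ m) :
    Tendsto (fun z => f z / z ^ n) (𝓝[≠] 0) (𝓝 L) := by
  have hnorm : Tendsto (‖·‖) (𝓝[≠] (0 : ℂ)) (𝓝 0) :=
    tendsto_norm_nhdsNE_zero.mono_right nhdsWithin_le_nhds
  rw [tendsto_iff_norm_sub_tendsto_zero]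
  refine squeeze_zero' (Eventually.of_forall fun _ => norm_nonneg _) ?_
    (g := fun z : ℂ => C * ‖z‖ ^ (m - n))
    (by simpa [zero_pow (Nat.sub_ne_zero_of_lt hnm)] using
      (hnorm.pow (m - n)).const_mul C)
  filter_upwards [hnorm.eventually (eventually_le_nhds one_pos),
    self_mem_nhdsWithin] with z hz1 (hz0 : z ≠ 0)
  have key : f z / z ^ n - L = (f z - L * z ^ n) / z ^ n := by field_simp
  rw [key, norm_div, norm_pow, div_le_iff₀ (pow_pos (norm_pos_iff.2 hz0) n), mul_assoc,
    ← pow_add, Nat.sub_add_cancel hnm.le]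
  exact hf z hz1

lemma tendsto_sin_div_self : Tendsto (fun z : ℂ => sin z / z) (𝓝[≠] 0) (𝓝 1) := by
  have h := hasDerivAt_iff_tendsto_slope.1 (hasDerivAt_sin 0)
  rw [cos_zero] at h
  exact h.congr fun z => by simp [slope_def_field]

lemma tendsto_sin_sub_self_div_pow_three :
    Tendsto (fun z : ℂ => (sin z - z) / z ^ 3) (𝓝[≠] 0) (𝓝 (-1 / 6)) :=
  tendsto_div_pow_of_norm_sub_le (m := 5) (C := 1 / 100) (by norm_num) fun z hz => by
    convert sin_bound hz using 1
    · congr 1; ring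
    · ring

lemma tendsto_cos_sub_one_div_sq :
    Tendsto (fun z : ℂ => (cos z - 1) / z ^ 2) (𝓝[≠] 0) (𝓝 (-1 / 2)) :=
  tendsto_div_pow_of_norm_sub_le (m := 4) (C := 5 / 96) (by norm_num) fun z hz => by
    convert cos_bound hz using 1
    · congr 1; ring
    · ring

lemma eventually_sin_ne_zero_nhdsNE : ∀ᶠ z : ℂ in 𝓝[≠] 0, z ≠ 0 ∧ sin z ≠ 0 := by
  filter_upwards [self_mem_nhdsWithin,
    tendsto_sin_div_self.eventually_ne one_ne_zero] with z hz0 hz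
  exact ⟨hz0, fun h => hz (by simp [h])⟩

lemma tendsto_mul_cot : Tendsto (fun z : ℂ => z * cot z) (𝓝[≠] 0) (𝓝 1) := by
  have hcos : Tendsto (fun z : ℂ => cos z) (𝓝[≠] 0) (𝓝 1) := by
    simpa using (continuous_cos.tendsto 0).mono_left nhdsWithin_le_nhds
  have h := hcos.div tendsto_sin_div_self one_ne_zero
  rw [div_one] at h
  refine h.congr' ?_
  filter_upwards [eventually_sin_ne_zero_nhdsNE] with z ⟨hz0, hs⟩
  rw [cot_eq_cos_div_sin]
  simp only [Pi.div_apply]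
  field_simp

lemma tendsto_mul_cot_sub_one_div_sq :
    Tendsto (fun z : ℂ => (z * cot z - 1) / z ^ 2) (𝓝[≠] 0) (𝓝 (-1 / 3)) := by
  have h := (tendsto_cos_sub_one_div_sq.sub tendsto_sin_sub_self_div_pow_three).div
    tendsto_sin_div_self one_ne_zero
  convert h.congr' ?_ using 2
  · norm_num
  filter_upwards [eventually_sin_ne_zero_nhdsNE] with z ⟨hz0, hs⟩
  rw [cot_eq_cos_div_sin]
  simp only [Pi.div_apply]
  field_simp
  ring

lemma tendsto_inv_sin_sq_sub_inv_sq :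
    Tendsto (fun z : ℂ => 1 / sin z ^ 2 - 1 / z ^ 2) (𝓝[≠] 0) (𝓝 (1 / 3)) := by
  have h := (tendsto_sin_sub_self_div_pow_three.neg.mul (tendsto_sin_div_self.const_add 1)).div
    (tendsto_sin_div_self.pow 2) (by norm_num)
  convert h.congr' ?_ using 2
  · norm_num
  filter_upwards [eventually_sin_ne_zero_nhdsNE] with z ⟨hz0, hs⟩
  simp only [Pi.div_apply]
  field_simp
  ring

lemma tendsto_mul_cot_mul_div_sin_half_sq_sub {a : ℂ} (ha : a ≠ 0) :
    Tendsto (fun z : ℂ => z * (cot (a * z) / sin (z / 2) ^ 2) - 4 / a / z ^ 2) (𝓝[≠] 0)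
      (𝓝 (1 / (3 * a) - 4 * a / 3)) := by
  have hF := tendsto_mul_cot_sub_one_div_sq.comp (tendsto_const_mul_nhdsNE ha)
  have hG := tendsto_mul_cot.comp (tendsto_const_mul_nhdsNE ha)
  have hH := tendsto_inv_sin_sq_sub_inv_sq.comp
    (tendsto_const_mul_nhdsNE (inv_ne_zero (two_ne_zero' ℂ)))
  have h := (hF.const_mul (4 * a)).add ((hG.div_const a).mul hH)
  convert h.congr' ?_ using 2
  · field_simp
    ring
  filter_upwards [self_mem_nhdsWithin] with z (hz : z ≠ 0)
  simp only [Function.comp_apply, ← div_eq_inv_mul]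
  field_simp
  ring

theorem circleIntegral_eq_of_tendsto_sub_center_mul_sub {c A L : ℂ} {R : ℝ} {n : ℕ} {f : ℂ → ℂ}
    (hR : 0 < R) (hn : n ≠ 0) (hf : ∀ z ∈ closedBall c R \ {c}, DifferentiableAt ℂ f z)
    (hL : Tendsto (fun z => (z - c) * f z - A / (z - c) ^ n) (𝓝[≠] c) (𝓝 L)) :
    (∮ z in C(c, R), f z) = 2 * π * I * L := by
  set H : ℂ → ℂ := fun z => (z - c) * f z - A / (z - c) ^ n
  have hH : ∀ z ∈ closedBall c R \ {c}, DifferentiableAt ℂ H z := fun z hz =>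
    ((differentiableAt_id.sub_const c).mul (hf z hz)).sub ((differentiableAt_const A).div
      ((differentiableAt_id.sub_const c).pow n) (pow_ne_zero n (sub_ne_zero.2 hz.2)))
  have hsphere : sphere c R ⊆ closedBall c R \ {c} := fun z hz =>
    ⟨sphere_subset_closedBall hz, ne_of_mem_sphere hz hR.ne'⟩
  have hCauchy : (∮ z in C(c, R), (z - c)⁻¹ • H z) = (2 * π * I : ℂ) • L :=
    circleIntegral_sub_center_inv_smul_of_differentiable_on_off_countable_of_tendsto hR
      countable_empty (fun z hz => (hH z hz).continuousAt.continuousWithinAt)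
      (fun z hz => hH z ⟨ball_subset_closedBall hz.1.1, hz.1.2⟩) hL
  have hpow : (∮ z in C(c, R), A * (z - c) ^ (-(n + 1) : ℤ)) = 0 := by
    rw [circleIntegral.integral_const_mul, circleIntegral.integral_sub_zpow_of_ne (by omega),
      mul_zero]
  have hsplit : EqOn f (fun z => (z - c)⁻¹ • H z + A * (z - c) ^ (-(n + 1) : ℤ)) (sphere c R) := by
    intro z hz
    have hz : z - c ≠ 0 := sub_ne_zero.2 (hsphere hz).2
    simp only [H, smul_eq_mul, zpow_neg]
    norm_cast
    field_simp
    ring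
  rw [circleIntegral.integral_congr hR.le hsplit, circleIntegral.integral_add, hCauchy, hpow,
    add_zero, smul_eq_mul]
  · refine ContinuousOn.circleIntegrable hR.le fun z hz => ?_
    have hz' := hsphere hz
    exact ((continuousAt_id.sub continuousAt_const).inv₀ (sub_ne_zero.2 hz'.2)).smul
      (hH z hz').continuousAt |>.continuousWithinAt
  · refine ContinuousOn.circleIntegrable hR.le fun z hz => ?_
    exact (continuousAt_const.mul ((continuousAt_id.sub continuousAt_const).zpow₀ _
      (Or.inl (sub_ne_zero.2 (hsphere hz).2)))).continuousWithinAt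

end Complex

open Complex

/-- For `β > 0` and `0 < δ < min(β, 2π)`, the integral of
`γ ↦ cot(πγ/β) / sin²(γ/2)` over the positively oriented circle of radius `δ`
centered at `0` equals `2πi · (2/3) · (β/(2π) − 2π/β)`. -/
theorem circleIntegral_cot_div_sin_sq (β δ : ℝ) (hβ : 0 < β)
    (hδ : 0 < δ) (hδβ : δ < β) (hδ2π : δ < 2 * Real.pi) :
    (∮ γ in C(0, δ),
        Complex.cot ((Real.pi : ℂ) * γ / (β : ℂ)) / (Complex.sin (γ / 2)) ^ 2) =
      2 * (Real.pi : ℂ) * Complex.I * (2 / 3) *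
        ((β : ℂ) / (2 * (Real.pi : ℂ)) - 2 * (Real.pi : ℂ) / (β : ℂ)) := by
  have hπ : (π : ℂ) ≠ 0 := ofReal_ne_zero.2 Real.pi_ne_zero
  have hβ' : (β : ℂ) ≠ 0 := ofReal_ne_zero.2 hβ.ne'
  have hdiff : ∀ γ ∈ closedBall (0 : ℂ) δ \ {0},
      DifferentiableAt ℂ (fun γ => cot (π * γ / β) / sin (γ / 2) ^ 2) γ := by
    rintro γ ⟨hγδ, hγ0 : γ ≠ 0⟩
    rw [mem_closedBall_zero_iff] at hγδ
    have hsin₁ : sin (π * γ / β) ≠ 0 := by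
      refine sin_ne_zero_of_norm_lt_pi (by simp [hγ0, hβ.ne', Real.pi_ne_zero]) ?_
      rw [norm_div, norm_mul, norm_real, norm_real, Real.norm_of_nonneg Real.pi_pos.le,
        Real.norm_of_nonneg hβ.le, div_lt_iff₀ hβ]
      nlinarith [Real.pi_pos]
    have hsin₂ : sin (γ / 2) ≠ 0 := by
      refine sin_ne_zero_of_norm_lt_pi (div_ne_zero hγ0 two_ne_zero) ?_
      rw [norm_div, RCLike.norm_ofNat]
      linarith
    exact ((differentiableAt_cot hsin₁).comp (f := fun γ : ℂ => π * γ / β) γ (by fun_prop)).div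
      (by fun_prop) (pow_ne_zero 2 hsin₂)
  have hlim := tendsto_mul_cot_mul_div_sin_half_sq_sub (div_ne_zero hπ hβ')
  rw [circleIntegral_eq_of_tendsto_sub_center_mul_sub (A := 4 / (π / β)) hδ two_ne_zero hdiff
    (hlim.congr fun γ => by simp only [sub_zero, div_mul_eq_mul_div])]
  field_simp
  ring
end

section
/- Let t > 0, let r ≥ 0 and ρ ≥ 0, let θ and ψ be real numbers, and let 0 < δ < 2π. Then (1/(16π² i t)) · e^{−(r²+ρ²)/(4t)} · ∮_{|α−ψ|=δ} exp( rρ cos(α−θ)/(2t) ) · cot( (α−ψ)/2 ) dα = (1/(4πt)) · exp( −( r² + ρ² − 2 r ρ cos(θ−ψ) )/(4t) ), where the contour is the positively oriented circle of radius δ centered at ψ in the complex α-plane. -/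
/-! The function `w * cot (w / 2)` has a removable singularity at `0`, with value `2`, and no other
singularity in `|w| < 2π`. Hence for `g` holomorphic on the closed disc of radius `δ < 2π` about `ψ`,
Cauchy's integral formula applied to `g(α) (α - ψ) cot ((α - ψ) / 2)` gives
`∮ g(α) cot ((α - ψ) / 2) dα = 4πi g(ψ)`. Taking for `g` the entire function
`exp (rρ cos (α - θ) / (2t))`, the prefactors combine into the planar heat kernel. -/

open Complex Metric

theorem sin_half_ne_zero_of_norm_lt {w : ℂ} (hw : w ≠ 0) (hw2π : ‖w‖ < 2 * Real.pi) :
    sin (w / 2) ≠ 0 := by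
  rw [sin_ne_zero_iff]
  intro k hk
  have hwk : w = 2 * k * Real.pi := by linear_combination 2 * hk
  have hk0 : k ≠ 0 := by rintro rfl; simp [hwk] at hw
  have hnorm : ‖w‖ = 2 * |(k : ℝ)| * Real.pi := by
    simp [hwk, norm_intCast, abs_of_pos Real.pi_pos]
  have hk1 : (1 : ℝ) ≤ |(k : ℝ)| := by exact_mod_cast Int.one_le_abs hk0
  nlinarith [Real.pi_pos]

theorem dslope_sin_half_zero : dslope (fun z : ℂ => sin (z / 2)) 0 0 = 1 / 2 := by
  have hderiv : HasDerivAt (fun z : ℂ => sin (z / 2)) (1 / 2) 0 := by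
    simpa using ((hasDerivAt_id (0 : ℂ)).div_const 2).csin
  rw [dslope_same, hderiv.deriv]

theorem dslope_sin_half_ne_zero {w : ℂ} (hw : ‖w‖ < 2 * Real.pi) :
    dslope (fun z : ℂ => sin (z / 2)) 0 w ≠ 0 := by
  rcases eq_or_ne w 0 with rfl | hw0
  · rw [dslope_sin_half_zero]; norm_num
  · rw [dslope_of_ne _ hw0, slope_def_field]
    simpa [hw0] using sin_half_ne_zero_of_norm_lt hw0 hw

/-- `w * cot (w / 2)` with its removable singularity at `0` filled in; holomorphic on `|w| < 2π`. -/
noncomputable def mulCotHalf (w : ℂ) : ℂ :=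
  cos (w / 2) / dslope (fun z => sin (z / 2)) 0 w

theorem mulCotHalf_of_ne_zero {w : ℂ} (hw : w ≠ 0) : mulCotHalf w = w * cot (w / 2) := by
  rw [mulCotHalf, dslope_of_ne _ hw, slope_def_field, cot_eq_cos_div_sin]
  simp only [zero_div, sin_zero, sub_zero]
  rw [div_div_eq_mul_div, mul_div_assoc', mul_comm]

theorem mulCotHalf_zero : mulCotHalf 0 = 2 := by
  rw [mulCotHalf, dslope_sin_half_zero]
  norm_num

theorem differentiableOn_mulCotHalf : DifferentiableOn ℂ mulCotHalf (ball 0 (2 * Real.pi)) := by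
  have hslope : DifferentiableOn ℂ (dslope (fun z => sin (z / 2)) 0) (ball 0 (2 * Real.pi)) :=
    (differentiableOn_dslope (ball_mem_nhds 0 (by positivity))).2 (by fun_prop)
  exact (by fun_prop : Differentiable ℂ fun w : ℂ => cos (w / 2)).differentiableOn.div hslope
    fun w hw => dslope_sin_half_ne_zero (by simpa using hw)

theorem circleIntegral_mul_cot_half_sub {g : ℂ → ℂ} {c : ℂ} {R : ℝ} (hR : 0 < R)
    (hR2π : R < 2 * Real.pi) (hg : DifferentiableOn ℂ g (closedBall c R)) :
    (∮ z in C(c, R), g z * cot ((z - c) / 2)) = 4 * Real.pi * I * g c := by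
  have hF : DifferentiableOn ℂ (fun z => g z * mulCotHalf (z - c)) (closedBall c R) := by
    refine hg.mul (differentiableOn_mulCotHalf.comp (differentiableOn_id.sub_const c) ?_)
    intro z hz
    simpa [← dist_eq] using (mem_closedBall.1 hz).trans_lt hR2π
  have hcauchy := hF.circleIntegral_sub_inv_smul (mem_ball_self hR)
  rw [sub_self, mulCotHalf_zero, smul_eq_mul] at hcauchy
  calc (∮ z in C(c, R), g z * cot ((z - c) / 2))
      = ∮ z in C(c, R), (z - c)⁻¹ • (g z * mulCotHalf (z - c)) := by
        refine circleIntegral.integral_congr hR.le fun z hz => ?_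
        have hzc : z - c ≠ 0 := sub_ne_zero.2 (ne_of_mem_sphere hz hR.ne')
        rw [smul_eq_mul, mulCotHalf_of_ne_zero hzc]
        field_simp
    _ = 4 * Real.pi * I * g c := by rw [hcauchy]; ring

theorem heat_kernel_contour_representation_general (t r ρ θ ψ δ : ℝ)
    (ht : 0 < t) (hδ : 0 < δ) (hδ2π : δ < 2 * Real.pi) :
    (1 / (16 * (Real.pi : ℂ) ^ 2 * Complex.I * (t : ℂ))) *
        Complex.exp (-(((r : ℂ) ^ 2 + (ρ : ℂ) ^ 2) / (4 * (t : ℂ)))) *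
        (∮ α in C((ψ : ℂ), δ),
          Complex.exp ((r : ℂ) * (ρ : ℂ) * Complex.cos (α - (θ : ℂ)) / (2 * (t : ℂ))) *
            Complex.cot ((α - (ψ : ℂ)) / 2)) =
      (1 / (4 * (Real.pi : ℂ) * (t : ℂ))) *
        Complex.exp (-(((r : ℂ) ^ 2 + (ρ : ℂ) ^ 2 -
          2 * (r : ℂ) * (ρ : ℂ) * Complex.cos ((θ : ℂ) - (ψ : ℂ))) / (4 * (t : ℂ)))) := by
  have hg : Differentiable ℂ fun α : ℂ =>
      exp ((r : ℂ) * ρ * cos (α - θ) / (2 * t)) := by fun_prop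
  have hcos : cos ((ψ : ℂ) - θ) = cos (θ - ψ) := by rw [← cos_neg, neg_sub]
  rw [circleIntegral_mul_cot_half_sub hδ hδ2π hg.differentiableOn, hcos]
  have ht0 : (t : ℂ) ≠ 0 := by exact_mod_cast ht.ne'
  have hπ : (Real.pi : ℂ) ≠ 0 := by exact_mod_cast Real.pi_ne_zero
  calc _ = 1 / (4 * Real.pi * t) * (exp (-((r ^ 2 + ρ ^ 2) / (4 * t))) *
        exp (r * ρ * cos (θ - ψ) / (2 * t))) := by
        field_simp
        norm_num
    _ = _ := by
        rw [← exp_add]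
        congr 2
        field_simp
        ring

/-- Carslaw's contour-integral representation of the planar heat kernel:
for `t > 0`, `r, ρ ≥ 0`, real `θ, ψ`, and `0 < δ < 2π`,
`(1/(16π²it)) e^{−(r²+ρ²)/(4t)} ∮_{|α−ψ|=δ} e^{rρcos(α−θ)/(2t)} cot((α−ψ)/2) dα
  = (1/(4πt)) e^{−(r²+ρ²−2rρcos(θ−ψ))/(4t)}`. -/
theorem heat_kernel_contour_representation (t r ρ θ ψ δ : ℝ)
    (ht : 0 < t) (hr : 0 ≤ r) (hρ : 0 ≤ ρ) (hδ : 0 < δ) (hδ2π : δ < 2 * Real.pi) :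
    (1 / (16 * (Real.pi : ℂ) ^ 2 * Complex.I * (t : ℂ))) *
        Complex.exp (-(((r : ℂ) ^ 2 + (ρ : ℂ) ^ 2) / (4 * (t : ℂ)))) *
        (∮ α in C((ψ : ℂ), δ),
          Complex.exp ((r : ℂ) * (ρ : ℂ) * Complex.cos (α - (θ : ℂ)) / (2 * (t : ℂ))) *
            Complex.cot ((α - (ψ : ℂ)) / 2)) =
      (1 / (4 * (Real.pi : ℂ) * (t : ℂ))) *
        Complex.exp (-(((r : ℂ) ^ 2 + (ρ : ℂ) ^ 2 -
          2 * (r : ℂ) * (ρ : ℂ) * Complex.cos ((θ : ℂ) - (ψ : ℂ))) / (4 * (t : ℂ)))) :=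
  heat_kernel_contour_representation_general t r ρ θ ψ δ ht hδ hδ2π
end

section
/- Let (λ_k) be a sequence of strictly positive reals whose counting function satisfies #{k : λ_k ≤ T} ≤ C·T for all T ≥ 1, and set θ(t) := Σ_k e^{−λ_k t} (the series converges for every t > 0). Suppose there exist c₀, c₁ ∈ ℝ and C′, ε > 0 such that |1 + θ(t) − c₀/t − c₁| ≤ C′ e^{−ε/t} for all 0 < t ≤ 1. Then there exists a holomorphic function Z on ℂ ∖ {1} such that Z(s) = Σ_k λ_k^{−s} for every s with Re s > 1, and Z(0) = c₁ − 1. -/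
/-!
The Mellin transform of the heat trace is `Γ(s) ζ(s)` for `Re s > 1`. Subtracting the small-time
expansion `c₀/t + (c₁ - 1)` on `(0, 1]` leaves a remainder that is `O(e^{-ε/t})` at `0` and
decays exponentially at `∞` (the eigenvalues are bounded below), so its Mellin transform `M` is
entire, and `Γ(s) ζ(s) = M(s) + c₀/(s - 1) + (c₁ - 1)/s`. Dividing by `Γ` continues `ζ` to
`ℂ ∖ {1}`; at `s = 0` the pole of `Γ` cancels that of `(c₁ - 1)/s`, leaving `ζ(0) = c₁ - 1`.
-/

open Complex Filter Set Asymptotics Topology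

open Finset in
theorem summable_comp_of_ncard_fiber_le {ι : Type*} {n : ι → ℕ} {g B : ℕ → ℝ} (hg : 0 ≤ g)
    (hfin : ∀ m, {k | n k = m}.Finite) (hcard : ∀ m, ({k | n k = m}.ncard : ℝ) ≤ B m)
    (hB : Summable fun m => B m * g m) : Summable (g ∘ n) := by
  classical
  refine summable_of_sum_le (c := ∑' m, B m * g m) (fun k => hg (n k)) fun u => ?_
  have hB0 : ∀ m, 0 ≤ B m * g m := fun m => mul_nonneg ((Nat.cast_nonneg _).trans (hcard m)) (hg m)
  calc ∑ k ∈ u, g (n k) = ∑ m ∈ u.image n, #{k ∈ u | n k = m} • g m := Finset.sum_comp g n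
    _ ≤ ∑ m ∈ u.image n, B m * g m := by
        refine Finset.sum_le_sum fun m _ => ?_
        rw [nsmul_eq_mul]
        refine mul_le_mul_of_nonneg_right (le_trans ?_ (hcard m)) (hg m)
        rw [← Set.ncard_coe_finset]
        exact_mod_cast Set.ncard_le_ncard (fun k hk => (Finset.mem_filter.mp hk).2) (hfin m)
    _ ≤ ∑' m, B m * g m := hB.sum_le_tsum _ fun m _ => hB0 m

section Counting

variable {ι : Type*} {lam : ι → ℝ} [Northcott lam] {C : ℝ}
  (hcard : ∀ T, 1 ≤ T → ({k | lam k ≤ T}.ncard : ℝ) ≤ C * T)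
include hcard

/-- Dyadic blocks `2 ^ m ≤ λ < 2 ^ (m + 1)` hold at most `C 2 ^ (m + 1)` terms, so the sum is
controlled by the Cauchy condensation of `∑ φ n`. -/
theorem summable_comp_of_ncard_le_mul {φ : ℝ → ℝ}
    (hφ0 : ∀ x, 0 ≤ x → 0 ≤ φ x) (hφ : AntitoneOn φ (Ioi 0)) (hφsum : Summable fun n : ℕ => φ n) :
    Summable fun k => φ (lam k) := by
  set n : ι → ℕ := fun k => Nat.log 2 ⌊lam k⌋₊
  have hfiber : ∀ m, {k | n k = m} ⊆ {k | lam k ≤ 2 ^ (m + 1)} := by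
    intro m k hk
    have h := Nat.lt_pow_succ_log_self one_lt_two ⌊lam k⌋₊
    rw [show Nat.log 2 ⌊lam k⌋₊ = m from hk] at h
    have : (⌊lam k⌋₊ : ℝ) + 1 ≤ 2 ^ (m + 1) := by exact_mod_cast h
    exact (Nat.lt_floor_add_one (lam k)).le.trans this
  have hcond : Summable fun m : ℕ => (2 : ℝ) ^ m * φ (2 ^ m) := by
    simpa using (summable_condensed_iff_of_nonneg (fun n => hφ0 n n.cast_nonneg)
      fun m n hm hmn => hφ (show (0 : ℝ) < m by exact_mod_cast hm)
        (show (0 : ℝ) < n by exact_mod_cast hm.trans_le hmn) (by exact_mod_cast hmn)).mpr hφsum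
  have hbins : Summable fun k => φ (2 ^ n k) := by
    refine summable_comp_of_ncard_fiber_le (g := fun m => φ (2 ^ m)) (B := fun m => C * 2 ^ (m + 1))
      (fun m => hφ0 _ (by positivity)) (fun m => (Northcott.finite_le _).subset (hfiber m))
      (fun m => ?_) ?_
    · have h := Set.ncard_le_ncard (hfiber m) (Northcott.finite_le _)
      exact (Nat.cast_le.mpr h).trans (hcard _ (one_le_pow₀ one_le_two))
    · exact (hcond.mul_left (2 * C)).congr fun m => by ring
  refine hbins.of_norm_bounded_eventually ?_
  filter_upwards [(Northcott.finite_le (h := lam) 1).compl_mem_cofinite] with k hk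
  have h1 : 1 ≤ lam k := (not_le.mp (by simpa using hk)).le
  have hpow : (2 : ℝ) ^ n k ≤ lam k := by
    have h := Nat.pow_log_le_self 2 (Nat.one_le_iff_ne_zero.mp ((Nat.one_le_floor_iff _).mpr h1))
    exact (by exact_mod_cast h : (2 : ℝ) ^ n k ≤ ⌊lam k⌋₊).trans (Nat.floor_le (by linarith))
  rw [Real.norm_of_nonneg (hφ0 _ (by linarith))]
  exact hφ (show (0 : ℝ) < 2 ^ n k by positivity) (show 0 < lam k by linarith) hpow

theorem summable_exp_neg_mul_of_ncard_le_mul {t : ℝ} (ht : 0 < t) :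
    Summable fun k => Real.exp (-lam k * t) :=
  summable_comp_of_ncard_le_mul hcard (φ := fun x => Real.exp (-x * t))
    (fun _ _ => (Real.exp_pos _).le)
    (fun _ _ _ _ hxy => Real.exp_le_exp.mpr (by nlinarith))
    ((Real.summable_exp_nat_mul_iff.mpr (neg_lt_zero.mpr ht)).congr fun n => by ring_nf)

theorem summable_rpow_neg_of_ncard_le_mul {σ : ℝ} (hσ : 1 < σ) :
    Summable fun k => lam k ^ (-σ) :=
  summable_comp_of_ncard_le_mul hcard (fun x hx => Real.rpow_nonneg hx _)
    (Real.antitoneOn_rpow_Ioi_of_exponent_nonpos (by linarith))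
    (Real.summable_nat_rpow.mpr (by linarith))

end Counting

open MeasureTheory in
theorem MeasureTheory.LocallyIntegrableOn.indicator {X E : Type*} [MeasurableSpace X]
    [TopologicalSpace X] [NormedAddCommGroup E] {μ : Measure X} {f : X → E} {U s : Set X}
    (hf : LocallyIntegrableOn f U μ) (hs : MeasurableSet s) :
    LocallyIntegrableOn (s.indicator f) U μ := fun x hx =>
  let ⟨t, ht, hint⟩ := hf x hx
  ⟨t, ht, hint.indicator hs⟩

theorem isLittleO_exp_neg_div_rpow_nhdsGT_zero {ε : ℝ} (hε : 0 < ε) (r : ℝ) :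
    (fun t => Real.exp (-ε / t)) =o[𝓝[>] 0] fun t => t ^ (-r) := by
  refine ((isLittleO_exp_neg_mul_rpow_atTop hε r).comp_tendsto tendsto_inv_nhdsGT_zero).congr'
    (Eventually.of_forall fun t => by simp only [Function.comp_apply, div_eq_mul_inv]) ?_
  filter_upwards [self_mem_nhdsWithin] with t ht
  simp only [Function.comp_apply, Real.inv_rpow (le_of_lt ht), Real.rpow_neg (le_of_lt ht)]

theorem hasMellin_indicator_Ioc_div_add (a b : ℂ) {s : ℂ} (hs : 1 < s.re) :
    HasMellin ((Ioc 0 1).indicator fun t : ℝ => a / t + b) s (a / (s - 1) + b / s) := by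
  have hpow := hasMellin_cpow_Ioc (-1) (s := s) (by simp only [neg_re, one_re]; linarith)
  have hone := hasMellin_one_Ioc (s := s) (by linarith)
  have hsum := hasMellin_add (hpow.1.const_smul a) (hone.1.const_smul b)
  rw [mellin_const_smul, mellin_const_smul, hpow.2, hone.2] at hsum
  have hfun : (Ioc 0 1).indicator (fun t : ℝ => a / t + b) = fun t =>
      a • (Ioc 0 1).indicator (fun t : ℝ => (t : ℂ) ^ (-1 : ℂ)) t +
        b • (Ioc 0 1).indicator (fun _ => (1 : ℂ)) t := by
    funext t
    by_cases ht : t ∈ Ioc (0 : ℝ) 1 <;> simp [ht, Complex.cpow_neg_one, div_eq_mul_inv]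
  rw [hfun, show a / (s - 1) + b / s = a • (1 / (s + -1)) + b • (1 / s) by
    simp [div_eq_mul_inv, sub_eq_add_neg]]
  exact hsum

theorem exists_differentiableOn_eq_of_gamma_mul_eq {M f : ℂ → ℂ} (hM : Differentiable ℂ M)
    (a b : ℂ) (h : ∀ s : ℂ, 1 < s.re → Gamma s * f s = M s + a / (s - 1) + b / s) :
    ∃ Z : ℂ → ℂ, DifferentiableOn ℂ Z {1}ᶜ ∧ (∀ s : ℂ, 1 < s.re → Z s = f s) ∧ Z 0 = b := by
  refine ⟨fun s => (M s + a / (s - 1)) * (Gamma s)⁻¹ + b * (Gamma (s + 1))⁻¹,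
    fun s hs => ?_, fun s hs => ?_, ?_⟩
  · have hpole : DifferentiableAt ℂ (fun s : ℂ => a / (s - 1)) s :=
      (differentiableAt_const a).div (differentiableAt_id.sub_const 1)
        (sub_ne_zero.mpr hs)
    have hshift : DifferentiableAt ℂ (fun s : ℂ => (Gamma (s + 1))⁻¹) s :=
      differentiable_one_div_Gamma.differentiableAt.comp s (differentiableAt_id.add_const 1)
    exact ((((hM s).add hpole).mul (differentiable_one_div_Gamma s)).add
      ((differentiableAt_const b).mul hshift)).differentiableWithinAt
  · have hs0 : s ≠ 0 := fun h => by norm_num [h] at hs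
    have hΓ : Gamma s ≠ 0 := Gamma_ne_zero_of_re_pos (by linarith)
    have hf : f s = (M s + a / (s - 1) + b / s) * (Gamma s)⁻¹ := by
      rw [← h s hs, mul_comm, inv_mul_cancel_left₀ hΓ]
    simp only [hf, Gamma_add_one s hs0, mul_inv]
    ring
  · -- The junk value `Gamma 0 = 0` agrees with the zero of the entire function `1 / Γ` at `0`.
    simp [Gamma_zero]

noncomputable def heatTrace {ι : Type*} (lam : ι → ℝ) (t : ℝ) : ℝ :=
  ∑' k, Real.exp (-lam k * t)

section HeatTrace

variable {ι : Type*} {lam : ι → ℝ}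
variable (hexp : ∀ t, 0 < t → Summable fun k => Real.exp (-lam k * t))
include hexp

theorem continuousOn_heatTrace (hlam : ∀ k, 0 ≤ lam k) : ContinuousOn (heatTrace lam) (Ioi 0) := by
  intro x hx
  have hx2 : ContinuousOn (heatTrace lam) (Ioi (x / 2)) :=
    continuousOn_tsum (fun k => by fun_prop) (hexp (x / 2) (half_pos hx)) fun k y hy => by
      rw [Real.norm_of_nonneg (Real.exp_pos _).le]
      exact Real.exp_le_exp.mpr (by nlinarith [hlam k, mem_Ioi.mp hy])
  exact (hx2.continuousAt (Ioi_mem_nhds (half_lt_self hx))).continuousWithinAt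

theorem heatTrace_isBigO_atTop {δ : ℝ} (hδ : ∀ k, δ ≤ lam k) :
    heatTrace lam =O[atTop] fun t => Real.exp (-δ * t) := by
  refine IsBigO.of_bound (Real.exp δ * heatTrace lam 1) ?_
  filter_upwards [eventually_ge_atTop 1] with t ht
  have hterm : ∀ k,
      Real.exp (-lam k * t) ≤ Real.exp δ * Real.exp (-δ * t) * Real.exp (-lam k * 1) := by
    intro k
    rw [← Real.exp_add, ← Real.exp_add]
    exact Real.exp_le_exp.mpr (by nlinarith [hδ k])
  have hsum := (hexp 1 one_pos).mul_left (Real.exp δ * Real.exp (-δ * t))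
  have hnonneg : 0 ≤ heatTrace lam t := tsum_nonneg fun k => (Real.exp_pos _).le
  rw [Real.norm_of_nonneg hnonneg,
    Real.norm_of_nonneg (Real.exp_pos _).le, mul_assoc, mul_comm (heatTrace lam 1), ← mul_assoc]
  exact (Summable.tsum_le_tsum hterm (hexp t (by linarith)) hsum).trans_eq tsum_mul_left

theorem mellin_heatTrace [Countable ι] (hpos : ∀ k, 0 < lam k) {s : ℂ} (hs : 0 < s.re)
    (hζ : Summable fun k => lam k ^ (-s.re)) :
    mellin (fun t => (heatTrace lam t : ℂ)) s = Gamma s * ∑' k, (lam k : ℂ) ^ (-s) := by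
  have hF : ∀ t ∈ Ioi (0 : ℝ),
      HasSum (fun k => 1 * (Real.exp (-lam k * t) : ℂ)) (heatTrace lam t : ℂ) := fun t ht => by
    simpa only [one_mul, heatTrace] using Complex.hasSum_ofReal.mpr (hexp t ht).hasSum
  have hsum : Summable fun k => ‖(1 : ℂ)‖ / lam k ^ s.re :=
    hζ.congr fun k => by rw [norm_one, Real.rpow_neg (hpos k).le, one_div]
  rw [← (hasSum_mellin (fun k => Or.inr (hpos k)) hs hF hsum).tsum_eq, ← tsum_mul_left]
  exact tsum_congr fun k => by rw [Complex.cpow_neg, mul_one, div_eq_mul_inv]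

end HeatTrace

/-- The expansion is cut off at `t = 1` so that the remainder keeps the exponential decay of the
heat trace at infinity, while the cut-off expansion has an explicit Mellin transform. -/
noncomputable def heatRemainder {ι : Type*} (lam : ι → ℝ) (a b : ℝ) (t : ℝ) : ℂ :=
  heatTrace lam t - (Ioc 0 1).indicator (fun t : ℝ => (a : ℂ) / t + b) t

section HeatRemainder

variable {ι : Type*} {lam : ι → ℝ} {a b : ℝ}

theorem locallyIntegrableOn_heatRemainder (hlam : ∀ k, 0 ≤ lam k)
    (hexp : ∀ t, 0 < t → Summable fun k => Real.exp (-lam k * t)) :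
    MeasureTheory.LocallyIntegrableOn (heatRemainder lam a b) (Ioi 0) := by
  have htrace : ContinuousOn (fun t => (heatTrace lam t : ℂ)) (Ioi 0) :=
    Complex.continuous_ofReal.comp_continuousOn (continuousOn_heatTrace hexp hlam)
  have hexpansion : ContinuousOn (fun t : ℝ => (a : ℂ) / t + b) (Ioi 0) :=
    ((continuous_const.continuousOn.div Complex.continuous_ofReal.continuousOn
      fun t ht => Complex.ofReal_ne_zero.mpr (ne_of_gt ht)).add continuousOn_const)
  exact (htrace.locallyIntegrableOn measurableSet_Ioi).sub
    ((hexpansion.locallyIntegrableOn measurableSet_Ioi).indicator measurableSet_Ioc)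

theorem heatRemainder_isBigO_atTop (hexp : ∀ t, 0 < t → Summable fun k => Real.exp (-lam k * t))
    {δ : ℝ} (hδ : ∀ k, δ ≤ lam k) :
    heatRemainder lam a b =O[atTop] fun t => Real.exp (-δ * t) := by
  refine (isBigO_ofReal_left.mpr (heatTrace_isBigO_atTop hexp hδ)).congr' ?_ EventuallyEq.rfl
  filter_upwards [eventually_gt_atTop 1] with t ht
  simp [heatRemainder, Set.indicator_of_notMem (fun h : t ∈ Ioc 0 1 => not_le.mpr ht h.2)]

theorem heatRemainder_isBigO_rpow_nhdsGT_zero {C ε : ℝ} (hε : 0 < ε)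
    (hexpansion : ∀ t, 0 < t → t ≤ 1 → |heatTrace lam t - a / t - b| ≤ C * Real.exp (-ε / t))
    (r : ℝ) : heatRemainder lam a b =O[𝓝[>] 0] fun t => t ^ (-r) := by
  refine IsBigO.trans ?_ (isLittleO_exp_neg_div_rpow_nhdsGT_zero hε r).isBigO
  refine IsBigO.of_bound C ?_
  filter_upwards [Ioc_mem_nhdsGT one_pos] with t ht
  have hrem : heatRemainder lam a b t = ((heatTrace lam t - a / t - b : ℝ) : ℂ) := by
    rw [heatRemainder, Set.indicator_of_mem ht]
    push_cast
    ring
  rw [hrem, Complex.norm_real, Real.norm_of_nonneg (Real.exp_pos _).le]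
  exact hexpansion t ht.1 ht.2

end HeatRemainder

section MellinRemainder

variable {ι : Type*} {lam : ι → ℝ} {a b C ε δ : ℝ} (hδ0 : 0 < δ) (hδ : ∀ k, δ ≤ lam k)
  (hexp : ∀ t, 0 < t → Summable fun k => Real.exp (-lam k * t)) (hε : 0 < ε)
  (hexpansion : ∀ t, 0 < t → t ≤ 1 → |heatTrace lam t - a / t - b| ≤ C * Real.exp (-ε / t))
include hδ0 hδ hexp hε hexpansion

theorem mellinConvergent_heatRemainder (s : ℂ) : MellinConvergent (heatRemainder lam a b) s :=
  mellinConvergent_of_isBigO_rpow_exp hδ0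
    (locallyIntegrableOn_heatRemainder (fun k => hδ0.le.trans (hδ k)) hexp)
    (heatRemainder_isBigO_atTop hexp hδ) (heatRemainder_isBigO_rpow_nhdsGT_zero hε hexpansion _)
    (sub_one_lt s.re)

theorem differentiable_mellin_heatRemainder : Differentiable ℂ (mellin (heatRemainder lam a b)) :=
  fun s => mellin_differentiableAt_of_isBigO_rpow_exp hδ0
    (locallyIntegrableOn_heatRemainder (fun k => hδ0.le.trans (hδ k)) hexp)
    (heatRemainder_isBigO_atTop hexp hδ) (heatRemainder_isBigO_rpow_nhdsGT_zero hε hexpansion _)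
    (sub_one_lt s.re)

theorem gamma_mul_tsum_rpow_eq_mellin_heatRemainder [Countable ι] (hpos : ∀ k, 0 < lam k)
    {s : ℂ} (hs : 1 < s.re) (hζ : Summable fun k => lam k ^ (-s.re)) :
    Gamma s * ∑' k, (lam k : ℂ) ^ (-s) =
      mellin (heatRemainder lam a b) s + a / (s - 1) + b / s := by
  have hsplit : (fun t => (heatTrace lam t : ℂ)) = fun t =>
      heatRemainder lam a b t + (Ioc 0 1).indicator (fun t : ℝ => (a : ℂ) / t + b) t := by
    funext t
    simp [heatRemainder]
  have hP := hasMellin_indicator_Ioc_div_add a b hs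
  rw [← mellin_heatTrace hexp hpos (by linarith) hζ, hsplit,
    (hasMellin_add (mellinConvergent_heatRemainder hδ0 hδ hexp hε hexpansion s) hP.1).2, hP.2,
    add_assoc]

end MellinRemainder

theorem zeta_extension_value_at_zero_general (lam : ℕ → ℝ) (hpos : ∀ k, 0 < lam k)
    (C : ℝ)
    (hcount : ∀ T : ℝ, 1 ≤ T → ∃ h : Set.Finite {k | lam k ≤ T},
      (h.toFinset.card : ℝ) ≤ C * T)
    (c₀ c₁ C' ε : ℝ) (hε : 0 < ε)
    (htrace : ∀ t : ℝ, 0 < t → t ≤ 1 →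
      |1 + (∑' k, Real.exp (-(lam k) * t)) - c₀ / t - c₁| ≤ C' * Real.exp (-ε / t)) :
    ∃ Z : ℂ → ℂ, DifferentiableOn ℂ Z {(1 : ℂ)}ᶜ ∧
      (∀ s : ℂ, 1 < s.re → Z s = ∑' k, (lam k : ℂ) ^ (-s)) ∧
      Z 0 = (c₁ : ℂ) - 1 := by
  have : Northcott lam := ⟨fun T => (hcount (max T 1) (le_max_right _ _)).fst.subset
    fun k (hk : lam k ≤ T) => le_trans hk (le_max_left _ _)⟩
  have hcard : ∀ T, 1 ≤ T → ({k | lam k ≤ T}.ncard : ℝ) ≤ C * T := fun T hT => by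
    obtain ⟨hfin, hle⟩ := hcount T hT
    rwa [Set.ncard_eq_toFinset_card _ hfin]
  have hexp : ∀ t, 0 < t → Summable fun k => Real.exp (-lam k * t) :=
    fun t => summable_exp_neg_mul_of_ncard_le_mul hcard
  obtain ⟨k₀, -, hk₀⟩ := Northcott.exists_min_image lam univ univ_nonempty
  have hmin : ∀ k, lam k₀ ≤ lam k := fun k => hk₀ k (mem_univ k)
  have hexpansion : ∀ t, 0 < t → t ≤ 1 →
      |heatTrace lam t - c₀ / t - (c₁ - 1)| ≤ C' * Real.exp (-ε / t) := fun t ht ht1 => by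
    convert htrace t ht ht1 using 2
    rw [heatTrace]
    ring
  obtain ⟨Z, hZ, hZζ, hZ0⟩ := exists_differentiableOn_eq_of_gamma_mul_eq
    (differentiable_mellin_heatRemainder (hpos k₀) hmin hexp hε hexpansion)
    c₀ ((c₁ - 1 : ℝ) : ℂ) fun s hs => by
      exact_mod_cast gamma_mul_tsum_rpow_eq_mellin_heatRemainder (hpos k₀) hmin hexp hε
        hexpansion hpos hs
        (summable_rpow_neg_of_ncard_le_mul hcard hs)
  exact ⟨Z, hZ, hZζ, by rw [hZ0, ofReal_sub, ofReal_one]⟩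

/-- If `(λ_k)` has at most linearly growing counting function and the heat
trace `1 + θ(t)`, `θ(t) = Σ_k e^{−λ_k t}`, satisfies
`1 + θ(t) = c₀/t + c₁ + O(e^{−ε/t})` as `t → 0+`, then the zeta function
`Σ_k λ_k^{−s}` extends holomorphically to `ℂ ∖ {1}` with value `c₁ − 1` at `0`. -/
theorem zeta_extension_value_at_zero (lam : ℕ → ℝ) (hpos : ∀ k, 0 < lam k)
    (C : ℝ) (hC : 0 < C)
    (hcount : ∀ T : ℝ, 1 ≤ T → ∃ h : Set.Finite {k | lam k ≤ T},
      (h.toFinset.card : ℝ) ≤ C * T)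
    (c₀ c₁ C' ε : ℝ) (hC' : 0 < C') (hε : 0 < ε)
    (htrace : ∀ t : ℝ, 0 < t → t ≤ 1 →
      |1 + (∑' k, Real.exp (-(lam k) * t)) - c₀ / t - c₁| ≤ C' * Real.exp (-ε / t)) :
    ∃ Z : ℂ → ℂ, DifferentiableOn ℂ Z {(1 : ℂ)}ᶜ ∧
      (∀ s : ℂ, 1 < s.re → Z s = ∑' k, (lam k : ℂ) ^ (-s)) ∧
      Z 0 = (c₁ : ℂ) - 1 :=
  zeta_extension_value_at_zero_general lam hpos C hcount c₀ c₁ C' ε hε htrace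
end
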